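/- Let U be the weighted Hilbert space as above. There is a constant C such that for all φ, ψ ∈ U with φ(∞) = ψ(∞) = 0, the map Sφ(x) = φ(x) ∫₀ˣ φ(y) dy satisfies the local Lipschitz estimate ‖Sφ − Sψ‖_U² ≤ C (‖φ‖_U² + ‖ψ‖_U²) ‖φ − ψ‖_U². -/

import Mathlib

open MeasureTheory Set Filter Topology

/-- `g` is a (locally integrable) weak derivative of `f` on `[0,∞)`. -/
def IsWeakDerivOn (f g : ℝ → ℝ) : Prop :=
  LocallyIntegrableOn g (Set.Ici 0) ∧
  ∀ x y : ℝ, 0 ≤ y → y ≤ x → f x - f y = ∫ z in y..x, g z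

/-- Membership in the weighted Hilbert space `U`. -/
def MemU (w φ d1 d2 : ℝ → ℝ) : Prop :=
  IsWeakDerivOn φ d1 ∧ IsWeakDerivOn d1 d2 ∧
  IntegrableOn (fun x => ((d1 x) ^ 2 + (d2 x) ^ 2) * w x) (Set.Ici 0)

/-- The `U`-norm `‖φ‖_U = (|φ(0)|² + |φ'(0)|² + ∫₀^∞ (|φ'|² + |φ''|²) w)^{1/2}`. -/
noncomputable def UNorm (w φ d1 d2 : ℝ → ℝ) : ℝ :=
  Real.sqrt ((φ 0) ^ 2 + (d1 0) ^ 2 +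
    ∫ x in Set.Ici (0:ℝ), ((d1 x) ^ 2 + (d2 x) ^ 2) * w x)

/-!
Write `B(f, g)(x) = f(x) ∫₀ˣ g` (`mulPrimitive`), so that `Sφ = B(φ, φ)` and
`Sφ - Sψ = B(φ, φ - ψ) + B(φ - ψ, ψ)`; it suffices to bound `‖B(f, g)‖_U² ≤ K ‖f‖_U² ‖g‖_U²`.
Let `J_f = ∫₀^∞ (f'² + f''²) w` (`energy`), `c = ∫₀^∞ w^{-1/3}` (`weightConstant`) and
`ω = w^{-1/3}`. If `f(∞) = 0` then `f(x) = -∫ₓ^∞ f'`, and Cauchy–Schwarz against the weight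
together with `∫ₓ^∞ w⁻¹ ≤ c ω(x)²` (monotonicity of `w`) gives `f(x)² ≤ c J_f ω(x)²`; integrating,
`(∫₀ˣ f)² ≤ c³ J_f`. In the derivatives `f'G + fg` and `f''G + 2f'g + fg'` of `B(f, g)` (with
`G = ∫₀ˣ g`) every term is a weighted-`L²` factor times a bounded one, except `fg`, for which
`(fg)² w ≤ c² J_f J_g ω⁴ w = c² J_f J_g ω` is integrable.
-/

lemma sq_integral_abs_le_integral_sq_mul_mul_integral_inv {α : Type*} [MeasurableSpace α]
    {μ : Measure α} {f v : α → ℝ} (hf : AEStronglyMeasurable f μ) (hv : ∀ᵐ x ∂μ, 0 < v x)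
    (hfv : Integrable (fun x => f x ^ 2 * v x) μ) (hv_inv : Integrable (fun x => (v x)⁻¹) μ) :
    (∫ x, |f x| ∂μ) ^ 2 ≤ (∫ x, f x ^ 2 * v x ∂μ) * ∫ x, (v x)⁻¹ ∂μ := by
  have hv_meas : AEMeasurable v μ := by simpa [Pi.inv_def] using hv_inv.aemeasurable.inv
  have hF2 : (fun x => (|f x| * √(v x)) ^ 2) =ᵐ[μ] fun x => f x ^ 2 * v x := by
    filter_upwards [hv] with x hx
    rw [mul_pow, sq_abs, Real.sq_sqrt hx.le]
  have hG2 : (fun x => √(v x)⁻¹ ^ 2) =ᵐ[μ] fun x => (v x)⁻¹ := by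
    filter_upwards [hv] with x hx
    rw [Real.sq_sqrt (inv_nonneg.2 hx.le)]
  have hFG : (fun x => |f x| * √(v x) * √(v x)⁻¹) =ᵐ[μ] fun x => |f x| := by
    filter_upwards [hv] with x hx
    rw [Real.sqrt_inv, mul_assoc, mul_inv_cancel₀ (Real.sqrt_pos.2 hx).ne', mul_one]
  have hF : MemLp (fun x => |f x| * √(v x)) 2 μ :=
    (memLp_two_iff_integrable_sq (by fun_prop)).2 (hfv.congr hF2.symm)
  have hG : MemLp (fun x => √(v x)⁻¹) 2 μ :=
    (memLp_two_iff_integrable_sq (by fun_prop)).2 (hv_inv.congr hG2.symm)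
  have holder := integral_mul_le_Lp_mul_Lq_of_nonneg Real.HolderConjugate.two_two
    (.of_forall fun x => mul_nonneg (abs_nonneg (f x)) (Real.sqrt_nonneg (v x)))
    (.of_forall fun x => Real.sqrt_nonneg (v x)⁻¹) (by simpa using hF) (by simpa using hG)
  simp only [Real.rpow_two] at holder
  rw [integral_congr_ae hF2, integral_congr_ae hG2, integral_congr_ae hFG,
    ← Real.sqrt_eq_rpow, ← Real.sqrt_eq_rpow] at holder
  have hA : 0 ≤ ∫ x, f x ^ 2 * v x ∂μ :=
    integral_nonneg_of_ae (by filter_upwards [hv] with x hx; positivity)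
  have hB : 0 ≤ ∫ x, (v x)⁻¹ ∂μ :=
    integral_nonneg_of_ae (by filter_upwards [hv] with x hx; positivity)
  calc (∫ x, |f x| ∂μ) ^ 2
      ≤ (√(∫ x, f x ^ 2 * v x ∂μ) * √(∫ x, (v x)⁻¹ ∂μ)) ^ 2 :=
        pow_le_pow_left₀ (integral_nonneg fun x => abs_nonneg _) holder 2
    _ = _ := by rw [mul_pow, Real.sq_sqrt hA, Real.sq_sqrt hB]

lemma rpow_neg_one_third_pow_three {a : ℝ} (ha : 0 ≤ a) : (a ^ (-(1 / 3 : ℝ))) ^ 3 = a⁻¹ := by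
  rw [← Real.rpow_natCast, ← Real.rpow_mul ha]
  norm_num [Real.rpow_neg_one]

structure IsAdmissibleWeight (w : ℝ → ℝ) : Prop where
  one_le : ∀ x ∈ Ici (0 : ℝ), 1 ≤ w x
  monotoneOn : MonotoneOn w (Ici 0)
  integrableOn_rpow : IntegrableOn (fun x => w x ^ (-(1 / 3 : ℝ))) (Ici 0)

noncomputable def weightConstant (w : ℝ → ℝ) : ℝ :=
  ∫ x in Ici (0 : ℝ), w x ^ (-(1 / 3 : ℝ))

namespace IsAdmissibleWeight

variable {w : ℝ → ℝ}

lemma pos (hw : IsAdmissibleWeight w) {x : ℝ} (hx : 0 ≤ x) : 0 < w x :=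
  one_pos.trans_le (hw.one_le x hx)

lemma aestronglyMeasurable (hw : IsAdmissibleWeight w) :
    AEStronglyMeasurable w (volume.restrict (Ici 0)) :=
  (aemeasurable_restrict_of_monotoneOn measurableSet_Ici hw.monotoneOn).aestronglyMeasurable

lemma weightConstant_nonneg (hw : IsAdmissibleWeight w) : 0 ≤ weightConstant w :=
  setIntegral_nonneg measurableSet_Ici fun _ hx => Real.rpow_nonneg (hw.pos hx).le _

lemma rpow_le_one (hw : IsAdmissibleWeight w) {x : ℝ} (hx : 0 ≤ x) :
    w x ^ (-(1 / 3 : ℝ)) ≤ 1 :=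
  Real.rpow_le_one_of_one_le_of_nonpos (hw.one_le x hx) (by norm_num)

lemma integrableOn_inv (hw : IsAdmissibleWeight w) :
    IntegrableOn (fun x => (w x)⁻¹) (Ici 0) := by
  refine hw.integrableOn_rpow.mono' hw.aestronglyMeasurable.aemeasurable.inv.aestronglyMeasurable
    (ae_restrict_of_forall_mem measurableSet_Ici fun x hx => ?_)
  have hω := Real.rpow_nonneg (hw.pos hx).le (-(1 / 3 : ℝ))
  rw [Real.norm_of_nonneg (inv_nonneg.2 (hw.pos hx).le),
    ← rpow_neg_one_third_pow_three (hw.pos hx).le]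
  exact pow_le_of_le_one hω (hw.rpow_le_one hx) three_ne_zero

/-- On `(x, ∞)`, `w⁻¹ = ω³ ≤ ω(x)² ω` for the antitone `ω = w^{-1/3}`. -/
lemma setIntegral_Ioi_inv_le (hw : IsAdmissibleWeight w) {x : ℝ} (hx : 0 ≤ x) :
    ∫ y in Ioi x, (w y)⁻¹ ≤ weightConstant w * (w x ^ (-(1 / 3 : ℝ))) ^ 2 := by
  have hsub : Ioi x ⊆ Ici 0 := fun y hy => hx.trans (le_of_lt hy)
  calc ∫ y in Ioi x, (w y)⁻¹
      ≤ ∫ y in Ioi x, (w x ^ (-(1 / 3 : ℝ))) ^ 2 * w y ^ (-(1 / 3 : ℝ)) := by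
        refine setIntegral_mono_on (hw.integrableOn_inv.mono_set hsub)
          ((hw.integrableOn_rpow.mono_set hsub).const_mul _) measurableSet_Ioi fun y hy => ?_
        have hy0 : 0 ≤ y := hsub hy
        have hωy := Real.rpow_nonneg (hw.pos hy0).le (-(1 / 3 : ℝ))
        have hωyx : w y ^ (-(1 / 3 : ℝ)) ≤ w x ^ (-(1 / 3 : ℝ)) :=
          Real.rpow_le_rpow_of_nonpos (hw.pos hx) (hw.monotoneOn hx hy0 (le_of_lt hy))
            (by norm_num)
        rw [← rpow_neg_one_third_pow_three (hw.pos hy0).le, pow_succ]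
        gcongr
    _ ≤ (w x ^ (-(1 / 3 : ℝ))) ^ 2 * weightConstant w := by
        rw [integral_const_mul]
        refine mul_le_mul_of_nonneg_left (setIntegral_mono_set hw.integrableOn_rpow
          (ae_restrict_of_forall_mem measurableSet_Ici fun y hy =>
            Real.rpow_nonneg (hw.pos hy).le _) hsub.eventuallyLE) (sq_nonneg _)
    _ = _ := mul_comm _ _

end IsAdmissibleWeight

lemma MeasureTheory.LocallyIntegrableOn.intervalIntegrable_of_nonneg {g : ℝ → ℝ}
    (hg : LocallyIntegrableOn g (Ici 0)) {a b : ℝ} (ha : 0 ≤ a) (hb : 0 ≤ b) :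
    IntervalIntegrable g volume a b :=
  (hg.integrableOn_compact_subset (fun _ hz => (le_min ha hb).trans hz.1)
    isCompact_uIcc).intervalIntegrable

lemma MeasureTheory.LocallyIntegrableOn.continuousOn_primitive_Ici {g : ℝ → ℝ}
    (hg : LocallyIntegrableOn g (Ici 0)) :
    ContinuousOn (fun x => ∫ y in (0 : ℝ)..x, g y) (Ici 0) := by
  intro x hx
  have hint : IntervalIntegrable g volume (min 0 0) (max 0 (x + 1)) :=
    hg.intervalIntegrable_of_nonneg (by simp) (by simp)
  exact (intervalIntegral.continuousWithinAt_primitive (measure_singleton x) hint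
    ).mono_of_mem_nhdsWithin (inter_mem_nhdsWithin _ (Iic_mem_nhds (by linarith)))

namespace IsWeakDerivOn

variable {θ θ' : ℝ → ℝ}

lemma continuousOn (h : IsWeakDerivOn θ θ') : ContinuousOn θ (Ici 0) := by
  refine ((continuousOn_const (c := θ 0)).add h.1.continuousOn_primitive_Ici).congr
    fun x hx => ?_
  simp only [Pi.add_apply]
  linarith [h.2 x 0 le_rfl hx]

lemma eq_neg_setIntegral_Ioi (h : IsWeakDerivOn θ θ') (hint : IntegrableOn θ' (Ici 0))
    (hlim : Tendsto θ atTop (𝓝 0)) {x : ℝ} (hx : 0 ≤ x) :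
    θ x = -∫ y in Ioi x, θ' y := by
  have htail : Tendsto (fun b => ∫ y in x..b, θ' y) atTop (𝓝 (∫ y in Ioi x, θ' y)) :=
    intervalIntegral_tendsto_integral_Ioi x
      (hint.mono_set fun y hy => hx.trans (le_of_lt hy)) tendsto_id
  have hdiff : Tendsto (fun b => ∫ y in x..b, θ' y) atTop (𝓝 (0 - θ x)) := by
    refine (hlim.sub_const (θ x)).congr' ?_
    filter_upwards [eventually_ge_atTop x] with b hb
    exact h.2 b x hx hb
  linarith [tendsto_nhds_unique htail hdiff]

lemma sub {f f' g g' : ℝ → ℝ} (hf : IsWeakDerivOn f f') (hg : IsWeakDerivOn g g') :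
    IsWeakDerivOn (fun x => f x - g x) (fun x => f' x - g' x) := by
  refine ⟨hf.1.sub hg.1, fun x y hy hyx => ?_⟩
  rw [intervalIntegral.integral_sub (hf.1.intervalIntegrable_of_nonneg hy (hy.trans hyx))
    (hg.1.intervalIntegrable_of_nonneg hy (hy.trans hyx)), ← hf.2 x y hy hyx, ← hg.2 x y hy hyx]
  ring

end IsWeakDerivOn

noncomputable def energy (w d1 d2 : ℝ → ℝ) : ℝ :=
  ∫ x in Ici (0 : ℝ), ((d1 x) ^ 2 + (d2 x) ^ 2) * w x

lemma energy_nonneg {w : ℝ → ℝ} (hw : ∀ x ∈ Ici (0 : ℝ), 0 ≤ w x) (d1 d2 : ℝ → ℝ) :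
    0 ≤ energy w d1 d2 :=
  setIntegral_nonneg measurableSet_Ici fun x hx => mul_nonneg (by positivity) (hw x hx)

lemma UNorm_sq {w : ℝ → ℝ} (hw : ∀ x ∈ Ici (0 : ℝ), 0 ≤ w x) (f d1 d2 : ℝ → ℝ) :
    UNorm w f d1 d2 ^ 2 = f 0 ^ 2 + d1 0 ^ 2 + energy w d1 d2 :=
  Real.sq_sqrt (by have := energy_nonneg hw d1 d2; positivity)

lemma UNorm_congr {w f d1 d2 g e1 e2 : ℝ → ℝ} (h0 : f 0 = g 0) (h1 : EqOn d1 e1 (Ici 0))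
    (h2 : EqOn d2 e2 (Ici 0)) : UNorm w f d1 d2 = UNorm w g e1 e2 := by
  rw [UNorm, UNorm, h0, h1 self_mem_Ici,
    setIntegral_congr_fun (g := fun x => ((e1 x) ^ 2 + (e2 x) ^ 2) * w x) measurableSet_Ici
      fun x hx => by simp only [h1 hx, h2 hx]]

lemma UNorm_add_sq_le {w d1 d2 e1 e2 : ℝ → ℝ} (hw : ∀ x ∈ Ici (0 : ℝ), 0 ≤ w x) (f g : ℝ → ℝ)
    (hf : IntegrableOn (fun x => ((d1 x) ^ 2 + (d2 x) ^ 2) * w x) (Ici 0))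
    (hg : IntegrableOn (fun x => ((e1 x) ^ 2 + (e2 x) ^ 2) * w x) (Ici 0)) :
    UNorm w (fun x => f x + g x) (fun x => d1 x + e1 x) (fun x => d2 x + e2 x) ^ 2 ≤
      2 * UNorm w f d1 d2 ^ 2 + 2 * UNorm w g e1 e2 ^ 2 := by
  have henergy : energy w (fun x => d1 x + e1 x) (fun x => d2 x + e2 x) ≤
      2 * energy w d1 d2 + 2 * energy w e1 e2 := by
    rw [energy, energy, energy, ← integral_const_mul, ← integral_const_mul,
      ← integral_add (hf.const_mul 2) (hg.const_mul 2)]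
    refine integral_mono_of_nonneg
      (ae_restrict_of_forall_mem measurableSet_Ici fun x hx => mul_nonneg (by positivity) (hw x hx))
      ((hf.const_mul 2).add (hg.const_mul 2))
      (ae_restrict_of_forall_mem measurableSet_Ici fun x hx => ?_)
    have := hw x hx
    nlinarith [mul_nonneg (add_nonneg (sq_nonneg (d1 x - e1 x)) (sq_nonneg (d2 x - e2 x))) this]
  rw [UNorm_sq hw, UNorm_sq hw, UNorm_sq hw]
  nlinarith [sq_nonneg (f 0 - g 0), sq_nonneg (d1 0 - e1 0)]

namespace MemU

variable {w θ θ' θ'' : ℝ → ℝ}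

lemma integrableOn_sq_mul (hw : IsAdmissibleWeight w) (h : MemU w θ θ' θ'') :
    IntegrableOn (fun x => θ' x ^ 2 * w x) (Ici 0) := by
  have hθ' := h.1.1.aestronglyMeasurable
  refine h.2.2.mono' ((hθ'.pow 2).mul hw.aestronglyMeasurable)
    (ae_restrict_of_forall_mem measurableSet_Ici fun x hx => ?_)
  have := (hw.pos hx).le
  rw [Real.norm_of_nonneg (by positivity)]
  nlinarith [sq_nonneg (θ'' x)]

lemma setIntegral_Ioi_sq_mul_le (hw : IsAdmissibleWeight w) (h : MemU w θ θ' θ'') {x : ℝ}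
    (hx : 0 ≤ x) : ∫ y in Ioi x, θ' y ^ 2 * w y ≤ energy w θ' θ'' := by
  calc ∫ y in Ioi x, θ' y ^ 2 * w y
      ≤ ∫ y in Ici 0, θ' y ^ 2 * w y :=
        setIntegral_mono_set (h.integrableOn_sq_mul hw)
          (ae_restrict_of_forall_mem measurableSet_Ici fun y hy =>
            mul_nonneg (sq_nonneg _) (hw.pos hy).le)
          (show Ioi x ⊆ Ici 0 from fun y hy => hx.trans (le_of_lt hy)).eventuallyLE
    _ ≤ energy w θ' θ'' :=
        setIntegral_mono_on (h.integrableOn_sq_mul hw) h.2.2 measurableSet_Ici fun y hy => by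
          have := (hw.pos hy).le
          nlinarith [sq_nonneg (θ'' y)]

/-- `|θ'| ≤ (θ'² w + w⁻¹) / 2`, and both terms are integrable. -/
lemma integrableOn_deriv (hw : IsAdmissibleWeight w) (h : MemU w θ θ' θ'') :
    IntegrableOn θ' (Ici 0) := by
  refine (((h.integrableOn_sq_mul hw).add hw.integrableOn_inv).div_const 2).mono'
    h.1.1.aestronglyMeasurable (ae_restrict_of_forall_mem measurableSet_Ici fun x hx => ?_)
  have hwx := hw.pos hx
  rw [Real.norm_eq_abs, Pi.add_apply, le_div_iff₀ two_pos, ← mul_le_mul_iff_of_pos_right hwx,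
    add_mul, inv_mul_cancel₀ hwx.ne']
  have h_sq : (|θ' x| * w x) ^ 2 = θ' x ^ 2 * w x * w x := by rw [mul_pow, sq_abs]; ring
  nlinarith [sq_nonneg (|θ' x| * w x - 1)]

lemma sq_le (hw : IsAdmissibleWeight w) (h : MemU w θ θ' θ'') (hlim : Tendsto θ atTop (𝓝 0))
    {x : ℝ} (hx : 0 ≤ x) :
    θ x ^ 2 ≤ weightConstant w * energy w θ' θ'' * (w x ^ (-(1 / 3 : ℝ))) ^ 2 := by
  have hsub : Ioi x ⊆ Ici 0 := fun y hy => hx.trans (le_of_lt hy)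
  have hpos : ∀ᵐ y ∂volume.restrict (Ioi x), 0 < w y :=
    ae_restrict_of_forall_mem measurableSet_Ioi fun y hy => hw.pos (hsub hy)
  calc θ x ^ 2 = |∫ y in Ioi x, θ' y| ^ 2 := by
        rw [h.1.eq_neg_setIntegral_Ioi (h.integrableOn_deriv hw) hlim hx, sq_abs, neg_sq]
    _ ≤ (∫ y in Ioi x, |θ' y|) ^ 2 :=
        pow_le_pow_left₀ (abs_nonneg _) (abs_integral_le_integral_abs) 2
    _ ≤ (∫ y in Ioi x, θ' y ^ 2 * w y) * ∫ y in Ioi x, (w y)⁻¹ :=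
        sq_integral_abs_le_integral_sq_mul_mul_integral_inv
          (h.1.1.aestronglyMeasurable.mono_set hsub) hpos
          ((h.integrableOn_sq_mul hw).mono_set hsub) (hw.integrableOn_inv.mono_set hsub)
    _ ≤ energy w θ' θ'' * (weightConstant w * (w x ^ (-(1 / 3 : ℝ))) ^ 2) :=
        mul_le_mul (h.setIntegral_Ioi_sq_mul_le hw hx) (hw.setIntegral_Ioi_inv_le hx)
          (setIntegral_nonneg measurableSet_Ioi fun y hy => (inv_pos.2 (hw.pos (hsub hy))).le)
          (energy_nonneg (fun y hy => (hw.pos hy).le) _ _)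
    _ = _ := by ring

lemma abs_le (hw : IsAdmissibleWeight w) (h : MemU w θ θ' θ'') (hlim : Tendsto θ atTop (𝓝 0))
    {x : ℝ} (hx : 0 ≤ x) :
    |θ x| ≤ √(weightConstant w * energy w θ' θ'') * w x ^ (-(1 / 3 : ℝ)) := by
  rw [← Real.sqrt_sq (Real.rpow_nonneg (hw.pos hx).le _), ← Real.sqrt_mul' _ (sq_nonneg _)]
  exact Real.abs_le_sqrt (h.sq_le hw hlim hx)

lemma integrableOn (hw : IsAdmissibleWeight w) (h : MemU w θ θ' θ'')
    (hlim : Tendsto θ atTop (𝓝 0)) : IntegrableOn θ (Ici 0) :=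
  (hw.integrableOn_rpow.const_mul _).mono'
    (h.1.continuousOn.aestronglyMeasurable measurableSet_Ici)
    (ae_restrict_of_forall_mem measurableSet_Ici fun _ hx => h.abs_le hw hlim hx)

lemma sq_primitive_le (hw : IsAdmissibleWeight w) (h : MemU w θ θ' θ'')
    (hlim : Tendsto θ atTop (𝓝 0)) {x : ℝ} (hx : 0 ≤ x) :
    (∫ y in (0 : ℝ)..x, θ y) ^ 2 ≤ weightConstant w ^ 3 * energy w θ' θ'' := by
  have hθ := h.integrableOn hw hlim
  have hbound : |∫ y in (0 : ℝ)..x, θ y| ≤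
      √(weightConstant w * energy w θ' θ'') * weightConstant w :=
    calc |∫ y in (0 : ℝ)..x, θ y|
        ≤ ∫ y in Ioc 0 x, |θ y| := by
          rw [intervalIntegral.integral_of_le hx]; exact abs_integral_le_integral_abs
      _ ≤ ∫ y in Ici 0, |θ y| :=
          setIntegral_mono_set hθ.abs (.of_forall fun _ => abs_nonneg _)
            (show Ioc 0 x ⊆ Ici 0 from fun _ hy => le_of_lt hy.1).eventuallyLE
      _ ≤ ∫ y in Ici 0, √(weightConstant w * energy w θ' θ'') * w y ^ (-(1 / 3 : ℝ)) :=
          setIntegral_mono_on hθ.abs (hw.integrableOn_rpow.const_mul _) measurableSet_Ici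
            fun _ hy => h.abs_le hw hlim hy
      _ = _ := integral_const_mul _ _
  have hE := energy_nonneg (fun y hy => (hw.pos hy).le) θ' θ''
  calc (∫ y in (0 : ℝ)..x, θ y) ^ 2
      ≤ (√(weightConstant w * energy w θ' θ'') * weightConstant w) ^ 2 := by
        rw [← sq_abs]; exact pow_le_pow_left₀ (abs_nonneg _) hbound 2
    _ = _ := by
        rw [mul_pow, Real.sq_sqrt (mul_nonneg hw.weightConstant_nonneg hE)]; ring

lemma sub {f f1 f2 g g1 g2 : ℝ → ℝ} (hw : IsAdmissibleWeight w) (hf : MemU w f f1 f2)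
    (hg : MemU w g g1 g2) :
    MemU w (fun x => f x - g x) (fun x => f1 x - g1 x) (fun x => f2 x - g2 x) := by
  refine ⟨hf.1.sub hg.1, hf.2.1.sub hg.2.1, ?_⟩
  have hmeas : AEStronglyMeasurable (fun x => ((f1 x - g1 x) ^ 2 + (f2 x - g2 x) ^ 2) * w x)
      (volume.restrict (Ici 0)) := by
    have := hf.1.1.aestronglyMeasurable; have := hf.2.1.1.aestronglyMeasurable
    have := hg.1.1.aestronglyMeasurable; have := hg.2.1.1.aestronglyMeasurable
    have := hw.aestronglyMeasurable
    fun_prop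
  refine ((hf.2.2.const_mul 2).add (hg.2.2.const_mul 2)).mono' hmeas
    (ae_restrict_of_forall_mem measurableSet_Ici fun x hx => ?_)
  have := (hw.pos hx).le
  simp only [Pi.add_apply]
  rw [Real.norm_of_nonneg (by positivity)]
  nlinarith [mul_nonneg (add_nonneg (sq_nonneg (f1 x + g1 x)) (sq_nonneg (f2 x + g2 x))) this]

end MemU

noncomputable def mulPrimitive (f g : ℝ → ℝ) (x : ℝ) : ℝ :=
  f x * ∫ y in (0 : ℝ)..x, g y

@[simp]
lemma mulPrimitive_zero (f g : ℝ → ℝ) : mulPrimitive f g 0 = 0 := by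
  simp [mulPrimitive]

-- The energy density of `mulPrimitive f g` at `x`, with `aᵢ = f⁽ⁱ⁾(x)`, `bᵢ = g⁽ⁱ⁾(x)`,
-- `G = ∫₀ˣ g`, `W = w(x)` and `ω = W^{-1/3}`.
lemma mulPrimitive_density_le {c Jf Jg a0 a1 a2 b0 b1 b2 G W ω : ℝ} (hc : 0 ≤ c)
    (hJf : 0 ≤ Jf) (hJg : 0 ≤ Jg) (hW : 0 ≤ W) (hω0 : 0 ≤ ω) (hω1 : ω ≤ 1)
    (hωW : ω ^ 3 * W = 1) (ha0 : a0 ^ 2 ≤ c * Jf * ω ^ 2) (hb0 : b0 ^ 2 ≤ c * Jg * ω ^ 2)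
    (hG : G ^ 2 ≤ c ^ 3 * Jg) :
    ((a1 * G + a0 * b0) ^ 2 + (a2 * G + 2 * a1 * b0 + a0 * b1) ^ 2) * W ≤
      (3 * c ^ 3 + 12 * c) * Jg * ((a1 ^ 2 + a2 ^ 2) * W) + 3 * c * Jf * ((b1 ^ 2 + b2 ^ 2) * W)
        + 2 * c ^ 2 * Jf * Jg * ω := by
  have hω2 : ω ^ 2 ≤ 1 := pow_le_one₀ hω0 hω1
  have hq1 : (a1 * G + a0 * b0) ^ 2 ≤ 2 * (a1 ^ 2 * G ^ 2) + 2 * (a0 ^ 2 * b0 ^ 2) := by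
    nlinarith [sq_nonneg (a1 * G - a0 * b0)]
  have hq2 : (a2 * G + 2 * a1 * b0 + a0 * b1) ^ 2 ≤
      3 * (a2 ^ 2 * G ^ 2) + 12 * (a1 ^ 2 * b0 ^ 2) + 3 * (a0 ^ 2 * b1 ^ 2) := by
    nlinarith [sq_nonneg (a2 * G - 2 * a1 * b0), sq_nonneg (a2 * G - a0 * b1),
      sq_nonneg (2 * a1 * b0 - a0 * b1)]
  have hG1 : a1 ^ 2 * G ^ 2 ≤ c ^ 3 * Jg * a1 ^ 2 := by nlinarith [sq_nonneg a1]
  have hG2 : a2 ^ 2 * G ^ 2 ≤ c ^ 3 * Jg * a2 ^ 2 := by nlinarith [sq_nonneg a2]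
  have hab : a0 ^ 2 * b0 ^ 2 ≤ c ^ 2 * Jf * Jg * ω ^ 4 := by
    calc a0 ^ 2 * b0 ^ 2 ≤ (c * Jf * ω ^ 2) * (c * Jg * ω ^ 2) :=
          mul_le_mul ha0 hb0 (sq_nonneg _) (by positivity)
      _ = _ := by ring
  have hb0' : b0 ^ 2 ≤ c * Jg := hb0.trans (by nlinarith [mul_nonneg hc hJg])
  have ha0' : a0 ^ 2 ≤ c * Jf := ha0.trans (by nlinarith [mul_nonneg hc hJf])
  have h12 : a1 ^ 2 * b0 ^ 2 ≤ c * Jg * a1 ^ 2 := by nlinarith [sq_nonneg a1]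
  have h01 : a0 ^ 2 * b1 ^ 2 ≤ c * Jf * b1 ^ 2 := by nlinarith [sq_nonneg b1]
  have hω4 : ω ^ 4 * W = ω := by linear_combination ω * hωW
  have hsum : (a1 * G + a0 * b0) ^ 2 + (a2 * G + 2 * a1 * b0 + a0 * b1) ^ 2 ≤
      (3 * c ^ 3 + 12 * c) * Jg * (a1 ^ 2 + a2 ^ 2) + 3 * c * Jf * (b1 ^ 2 + b2 ^ 2)
        + 2 * c ^ 2 * Jf * Jg * ω ^ 4 := by
    nlinarith [mul_nonneg (mul_nonneg (pow_nonneg hc 3) hJg) (sq_nonneg a1),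
      mul_nonneg (mul_nonneg hc hJf) (sq_nonneg b2)]
  calc _ ≤ ((3 * c ^ 3 + 12 * c) * Jg * (a1 ^ 2 + a2 ^ 2) + 3 * c * Jf * (b1 ^ 2 + b2 ^ 2)
        + 2 * c ^ 2 * Jf * Jg * ω ^ 4) * W := mul_le_mul_of_nonneg_right hsum hW
    _ = _ := by linear_combination 2 * c ^ 2 * Jf * Jg * hω4

namespace MemU

variable {w f f1 f2 g g1 g2 : ℝ → ℝ}

lemma aestronglyMeasurable_mulPrimitive_density (hw : IsAdmissibleWeight w)
    (hf : MemU w f f1 f2) (hg : MemU w g g1 g2) :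
    AEStronglyMeasurable (fun x => ((mulPrimitive f1 g x + f x * g x) ^ 2 +
      (mulPrimitive f2 g x + 2 * f1 x * g x + f x * g1 x) ^ 2) * w x)
      (volume.restrict (Ici 0)) := by
  have := hf.1.1.aestronglyMeasurable; have := hf.2.1.1.aestronglyMeasurable
  have := hg.1.1.aestronglyMeasurable; have := hw.aestronglyMeasurable
  have := hf.1.continuousOn.aestronglyMeasurable (μ := volume) measurableSet_Ici
  have := hg.1.continuousOn.aestronglyMeasurable (μ := volume) measurableSet_Ici
  have := ((hg.1.continuousOn.locallyIntegrableOn measurableSet_Ici).continuousOn_primitive_Ici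
    ).aestronglyMeasurable (μ := volume) measurableSet_Ici
  simp only [mulPrimitive]
  fun_prop

lemma energy_mulPrimitive_le (hw : IsAdmissibleWeight w) (hf : MemU w f f1 f2)
    (hg : MemU w g g1 g2) (hflim : Tendsto f atTop (𝓝 0)) (hglim : Tendsto g atTop (𝓝 0)) :
    IntegrableOn (fun x => ((mulPrimitive f1 g x + f x * g x) ^ 2 +
      (mulPrimitive f2 g x + 2 * f1 x * g x + f x * g1 x) ^ 2) * w x) (Ici 0) ∧
    energy w (fun x => mulPrimitive f1 g x + f x * g x)
        (fun x => mulPrimitive f2 g x + 2 * f1 x * g x + f x * g1 x) ≤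
      (5 * weightConstant w ^ 3 + 15 * weightConstant w) * energy w f1 f2 * energy w g1 g2 := by
  set c := weightConstant w
  set Jf := energy w f1 f2
  set Jg := energy w g1 g2
  have hc : 0 ≤ c := hw.weightConstant_nonneg
  have hJf : 0 ≤ Jf := energy_nonneg (fun x hx => (hw.pos hx).le) f1 f2
  have hJg : 0 ≤ Jg := energy_nonneg (fun x hx => (hw.pos hx).le) g1 g2
  have hf_int : IntegrableOn (fun x => (3 * c ^ 3 + 12 * c) * Jg * ((f1 x ^ 2 + f2 x ^ 2) * w x)
      + 3 * c * Jf * ((g1 x ^ 2 + g2 x ^ 2) * w x)) (Ici 0) :=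
    (hf.2.2.const_mul _).add (hg.2.2.const_mul _)
  have hbound : IntegrableOn (fun x => (3 * c ^ 3 + 12 * c) * Jg * ((f1 x ^ 2 + f2 x ^ 2) * w x)
      + 3 * c * Jf * ((g1 x ^ 2 + g2 x ^ 2) * w x) + 2 * c ^ 2 * Jf * Jg * w x ^ (-(1 / 3 : ℝ)))
      (Ici 0) :=
    hf_int.add (hw.integrableOn_rpow.const_mul _)
  have hpt : ∀ x ∈ Ici (0 : ℝ), ((mulPrimitive f1 g x + f x * g x) ^ 2 +
      (mulPrimitive f2 g x + 2 * f1 x * g x + f x * g1 x) ^ 2) * w x ≤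
      (3 * c ^ 3 + 12 * c) * Jg * ((f1 x ^ 2 + f2 x ^ 2) * w x)
        + 3 * c * Jf * ((g1 x ^ 2 + g2 x ^ 2) * w x) + 2 * c ^ 2 * Jf * Jg * w x ^ (-(1 / 3 : ℝ)) :=
    fun x hx => mulPrimitive_density_le hc hJf hJg (hw.pos hx).le
      (Real.rpow_nonneg (hw.pos hx).le _) (hw.rpow_le_one hx)
      (by rw [rpow_neg_one_third_pow_three (hw.pos hx).le, inv_mul_cancel₀ (hw.pos hx).ne'])
      (hf.sq_le hw hflim hx) (hg.sq_le hw hglim hx) (hg.sq_primitive_le hw hglim hx)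
  have hint := hbound.mono' (aestronglyMeasurable_mulPrimitive_density hw hf hg)
    (ae_restrict_of_forall_mem measurableSet_Ici fun x hx => by
      rw [Real.norm_of_nonneg (mul_nonneg (by positivity) (hw.pos hx).le)]
      exact hpt x hx)
  refine ⟨hint, ?_⟩
  calc _ ≤ ∫ x in Ici 0, (3 * c ^ 3 + 12 * c) * Jg * ((f1 x ^ 2 + f2 x ^ 2) * w x)
        + 3 * c * Jf * ((g1 x ^ 2 + g2 x ^ 2) * w x) + 2 * c ^ 2 * Jf * Jg * w x ^ (-(1 / 3 : ℝ)) :=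
        setIntegral_mono_on hint hbound measurableSet_Ici hpt
    _ = (3 * c ^ 3 + 12 * c) * Jg * Jf + 3 * c * Jf * Jg + 2 * c ^ 2 * Jf * Jg * c := by
        rw [integral_add hf_int (hw.integrableOn_rpow.const_mul _),
          integral_add (hf.2.2.const_mul _) (hg.2.2.const_mul _), integral_const_mul,
          integral_const_mul, integral_const_mul]
        rfl
    _ = _ := by ring

lemma UNorm_sq_mulPrimitive_le (hw : IsAdmissibleWeight w)
    (hf : MemU w f f1 f2) (hg : MemU w g g1 g2) (hflim : Tendsto f atTop (𝓝 0))
    (hglim : Tendsto g atTop (𝓝 0)) :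
    UNorm w (mulPrimitive f g) (fun x => mulPrimitive f1 g x + f x * g x)
        (fun x => mulPrimitive f2 g x + 2 * f1 x * g x + f x * g1 x) ^ 2 ≤
      (1 + 5 * weightConstant w ^ 3 + 15 * weightConstant w) *
        UNorm w f f1 f2 ^ 2 * UNorm w g g1 g2 ^ 2 := by
  have hw0 : ∀ x ∈ Ici (0 : ℝ), 0 ≤ w x := fun x hx => (hw.pos hx).le
  have hM : 0 ≤ 5 * weightConstant w ^ 3 + 15 * weightConstant w := by
    have := hw.weightConstant_nonneg; positivity
  have hJf := energy_nonneg hw0 f1 f2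
  have hJg := energy_nonneg hw0 g1 g2
  have hA₀ : f 0 ^ 2 ≤ UNorm w f f1 f2 ^ 2 := by
    rw [UNorm_sq hw0]; linarith [sq_nonneg (f1 0)]
  have hB₀ : g 0 ^ 2 ≤ UNorm w g g1 g2 ^ 2 := by
    rw [UNorm_sq hw0]; linarith [sq_nonneg (g1 0)]
  have hA : energy w f1 f2 ≤ UNorm w f f1 f2 ^ 2 := by
    rw [UNorm_sq hw0]; nlinarith [sq_nonneg (f 0), sq_nonneg (f1 0)]
  have hB : energy w g1 g2 ≤ UNorm w g g1 g2 ^ 2 := by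
    rw [UNorm_sq hw0]; nlinarith [sq_nonneg (g 0), sq_nonneg (g1 0)]
  rw [UNorm_sq hw0]
  simp only [mulPrimitive_zero, zero_add, ne_eq, OfNat.ofNat_ne_zero, not_false_eq_true, zero_pow]
  calc (f 0 * g 0) ^ 2 + energy w _ _
      ≤ f 0 ^ 2 * g 0 ^ 2 + (5 * weightConstant w ^ 3 + 15 * weightConstant w) *
          (energy w f1 f2 * energy w g1 g2) := by
        rw [mul_pow, ← mul_assoc]
        exact add_le_add_right (hf.energy_mulPrimitive_le hw hg hflim hglim).2 _
    _ ≤ UNorm w f f1 f2 ^ 2 * UNorm w g g1 g2 ^ 2 +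
          (5 * weightConstant w ^ 3 + 15 * weightConstant w) *
            (UNorm w f f1 f2 ^ 2 * UNorm w g g1 g2 ^ 2) := by
        gcongr
    _ = _ := by ring

end MemU

theorem stmt_11_general
    (w : ℝ → ℝ)
    (hw1 : ∀ x ∈ Set.Ici (0:ℝ), 1 ≤ w x)
    (hwmono : MonotoneOn w (Set.Ici 0))
    (hw13 : IntegrableOn (fun x => (w x) ^ (-(1/3 : ℝ))) (Set.Ici 0)) :
    ∃ C > 0, ∀ φ a1 a2 ψ b1 b2 : ℝ → ℝ,
      MemU w φ a1 a2 → MemU w ψ b1 b2 →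
      Tendsto φ atTop (𝓝 0) → Tendsto ψ atTop (𝓝 0) →
      (UNorm w
          (fun x => φ x * (∫ y in (0:ℝ)..x, φ y) -
            ψ x * ∫ y in (0:ℝ)..x, ψ y)
          (fun x => (a1 x * (∫ y in (0:ℝ)..x, φ y) + (φ x) ^ 2) -
            (b1 x * (∫ y in (0:ℝ)..x, ψ y) + (ψ x) ^ 2))
          (fun x => (a2 x * (∫ y in (0:ℝ)..x, φ y) + 3 * φ x * a1 x) -
            (b2 x * (∫ y in (0:ℝ)..x, ψ y) + 3 * ψ x * b1 x))) ^ 2 ≤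
        C * ((UNorm w φ a1 a2) ^ 2 + (UNorm w ψ b1 b2) ^ 2) *
          (UNorm w (fun x => φ x - ψ x) (fun x => a1 x - b1 x)
            (fun x => a2 x - b2 x)) ^ 2 := by
  have hw : IsAdmissibleWeight w := ⟨hw1, hwmono, hw13⟩
  set K := 1 + 5 * weightConstant w ^ 3 + 15 * weightConstant w
  refine ⟨2 * K, by have := hw.weightConstant_nonneg; positivity, ?_⟩
  intro φ a1 a2 ψ b1 b2 hφ hψ hφlim hψlim
  have hδ := hφ.sub hw hψ
  have hδlim : Tendsto (fun x => φ x - ψ x) atTop (𝓝 0) := by simpa using hφlim.sub hψlim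
  have hsplit : ∀ x ∈ Ici (0 : ℝ),
      ∫ y in (0 : ℝ)..x, (φ y - ψ y) = (∫ y in (0 : ℝ)..x, φ y) - ∫ y in (0 : ℝ)..x, ψ y :=
    fun x hx => intervalIntegral.integral_sub
      ((hφ.1.continuousOn.locallyIntegrableOn measurableSet_Ici).intervalIntegrable_of_nonneg
        le_rfl hx)
      ((hψ.1.continuousOn.locallyIntegrableOn measurableSet_Ici).intervalIntegrable_of_nonneg
        le_rfl hx)
  refine (le_of_eq (congrArg (· ^ 2) (UNorm_congr ?_ (fun x hx => ?_) (fun x hx => ?_)))).trans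
    ((UNorm_add_sq_le (fun x hx => (hw.pos hx).le) (mulPrimitive φ fun x => φ x - ψ x)
      (mulPrimitive (fun x => φ x - ψ x) ψ)
      (hφ.energy_mulPrimitive_le hw hδ hφlim hδlim).1
      (hδ.energy_mulPrimitive_le hw hψ hδlim hψlim).1).trans ?_)
  · simp [mulPrimitive]
  · simp only [mulPrimitive, hsplit x hx]; ring
  · simp only [mulPrimitive, hsplit x hx]; ring
  linarith [hφ.UNorm_sq_mulPrimitive_le hw hδ hφlim hδlim,
    hδ.UNorm_sq_mulPrimitive_le hw hψ hδlim hψlim]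

/-- local Lipschitz estimate
`‖Sφ − Sψ‖_U² ≤ C(‖φ‖_U² + ‖ψ‖_U²)‖φ − ψ‖_U²` for the HJM drift building
block `Sφ(x) = φ(x)∫₀ˣ φ(y) dy`. -/
theorem stmt_11
    (w : ℝ → ℝ)
    (hw1 : ∀ x ∈ Set.Ici (0:ℝ), 1 ≤ w x)
    (hwmono : MonotoneOn w (Set.Ici 0))
    (hwC1 : ContDiffOn ℝ 1 w (Set.Ici 0))
    (hw13 : IntegrableOn (fun x => (w x) ^ (-(1/3 : ℝ))) (Set.Ici 0)) :
    ∃ C > 0, ∀ φ a1 a2 ψ b1 b2 : ℝ → ℝ,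
      MemU w φ a1 a2 → MemU w ψ b1 b2 →
      Tendsto φ atTop (𝓝 0) → Tendsto ψ atTop (𝓝 0) →
      (UNorm w
          (fun x => φ x * (∫ y in (0:ℝ)..x, φ y) -
            ψ x * ∫ y in (0:ℝ)..x, ψ y)
          (fun x => (a1 x * (∫ y in (0:ℝ)..x, φ y) + (φ x) ^ 2) -
            (b1 x * (∫ y in (0:ℝ)..x, ψ y) + (ψ x) ^ 2))
          (fun x => (a2 x * (∫ y in (0:ℝ)..x, φ y) + 3 * φ x * a1 x) -
            (b2 x * (∫ y in (0:ℝ)..x, ψ y) + 3 * ψ x * b1 x))) ^ 2 ≤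
        C * ((UNorm w φ a1 a2) ^ 2 + (UNorm w ψ b1 b2) ^ 2) *
          (UNorm w (fun x => φ x - ψ x) (fun x => a1 x - b1 x)
            (fun x => a2 x - b2 x)) ^ 2 :=
  stmt_11_general w hw1 hwmono hw13
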